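/- arXiv:1801.07952 — 8 statements merged into one kernel-verified Lean document; each statement's English description precedes it below -/
import Mathlib

section
/- If pairs (μ₁, W₁) and (μ₂, W₂) satisfy property (τ) on ℝ^{n₁} and ℝ^{n₂} respectively, then the product pair (μ₁ ⊗ μ₂, W) satisfies property (τ), where W(x₁, x₂) = W₁(x₁) + W₂(x₂). -/
open MeasureTheory
open scoped ENNReal

/-- Exponential `EReal → ℝ≥0∞`, with `e^⊥ = 0` and `e^⊤ = ∞`. -/
noncomputable def expE (x : EReal) : ℝ≥0∞ :=
  if x = ⊥ then 0 else if x = ⊤ then ⊤ else ENNReal.ofReal (Real.exp x.toReal)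

/-- The pair `(μ, W)` satisfies Maurey's property `(τ)`: for every bounded measurable
`f`, `(∫ e^{W □ f} dμ) (∫ e^{-f} dμ) ≤ 1`, where
`(W □ f)(x) = inf_y { f(y) + W(x - y) }`. -/
def PropertyTau {E : Type*} [MeasurableSpace E] [AddGroup E]
    (μ : Measure E) (W : E → EReal) : Prop :=
  ∀ f : E → ℝ, Measurable f → (∃ C : ℝ, ∀ x, |f x| ≤ C) →
    (∫⁻ x, expE (⨅ y, (f y : EReal) + W (x - y)) ∂μ) *
      (∫⁻ x, ENNReal.ofReal (Real.exp (-f x)) ∂μ) ≤ 1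

/-! Tensorization. For `f` on the product, the marginal `g(x₁) = -log ∫ e^{-f(x₁, ·)} dμ₂`
satisfies `∫ e^{-g} dμ₁ = ∫ e^{-f} d(μ₁ ⊗ μ₂)`, while property `(τ)` for `μ₂`, applied to the
sections `f(y₁, ·)`, bounds `∫ e^{W □ f}(x₁, ·) dμ₂` by `e^{(W₁ □ g)(x₁)}`. Property `(τ)` for `μ₁`,
applied to `g`, then closes the argument. -/

lemma expE_eq_exp : expE = EReal.exp := by
  funext x
  induction x <;> simp [expE]

lemma EReal.exp_iInf {ι : Sort*} (a : ι → EReal) :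
    EReal.exp (⨅ i, a i) = ⨅ i, EReal.exp (a i) :=
  EReal.expOrderIso.map_iInf a

lemma ENNReal.le_ofReal_exp_of_mul_le_one {a : ℝ≥0∞} {r : ℝ}
    (h : a * ENNReal.ofReal (Real.exp (-r)) ≤ 1) : a ≤ ENNReal.ofReal (Real.exp r) := by
  rw [← EReal.exp_coe, EReal.coe_neg, EReal.exp_neg, ← div_eq_mul_inv,
    ENNReal.div_le_iff (by simp [Real.exp_pos]) (by simp), one_mul] at h
  simpa using h

lemma abs_log_toReal_le {J : ℝ≥0∞} {C : ℝ} (hlo : ENNReal.ofReal (Real.exp (-C)) ≤ J)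
    (hhi : J ≤ ENNReal.ofReal (Real.exp C)) : |Real.log J.toReal| ≤ C := by
  have hJ : J ≠ ⊤ := ne_top_of_le_ne_top ENNReal.ofReal_ne_top hhi
  have hpos : 0 < J.toReal :=
    (Real.exp_pos _).trans_le ((ENNReal.ofReal_le_iff_le_toReal hJ).mp hlo)
  rw [abs_le, Real.le_log_iff_exp_le hpos, Real.log_le_iff_le_exp hpos]
  exact ⟨(ENNReal.ofReal_le_iff_le_toReal hJ).mp hlo,
    ENNReal.toReal_le_of_le_ofReal (Real.exp_nonneg C) hhi⟩

lemma lintegral_ofReal_exp_mem_Icc {F : Type*} [MeasurableSpace F] (ν : Measure F)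
    [IsProbabilityMeasure ν] {h : F → ℝ} {C : ℝ} (hC : ∀ y, |h y| ≤ C) :
    ∫⁻ y, ENNReal.ofReal (Real.exp (h y)) ∂ν ∈
      Set.Icc (ENNReal.ofReal (Real.exp (-C))) (ENNReal.ofReal (Real.exp C)) := by
  constructor
  · calc ENNReal.ofReal (Real.exp (-C)) = ∫⁻ _, ENNReal.ofReal (Real.exp (-C)) ∂ν := by simp
      _ ≤ _ := lintegral_mono fun y => by gcongr; exact neg_le_of_abs_le (hC y)
  · calc ∫⁻ y, ENNReal.ofReal (Real.exp (h y)) ∂ν ≤ ∫⁻ _, ENNReal.ofReal (Real.exp C) ∂ν :=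
        lintegral_mono fun y => by gcongr; exact le_of_abs_le (hC y)
      _ = ENNReal.ofReal (Real.exp C) := by simp

section Marginal

variable {E F : Type*} [MeasurableSpace F] (ν : Measure F)

noncomputable def negLogMarginal (f : E × F → ℝ) (x : E) : ℝ :=
  -Real.log (∫⁻ y, ENNReal.ofReal (Real.exp (-f (x, y))) ∂ν).toReal

variable {ν}

lemma measurable_negLogMarginal [MeasurableSpace E] [SFinite ν] {f : E × F → ℝ}
    (hf : Measurable f) :
    Measurable (negLogMarginal ν f) := by
  unfold negLogMarginal
  have : Measurable fun p => ENNReal.ofReal (Real.exp (-f p)) := by fun_prop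
  exact (Real.measurable_log.comp (ENNReal.measurable_toReal.comp
    this.lintegral_prod_right')).neg

variable [IsProbabilityMeasure ν] {f : E × F → ℝ} {C : ℝ} (hC : ∀ p, |f p| ≤ C)
include hC

lemma abs_negLogMarginal_le (x : E) : |negLogMarginal ν f x| ≤ C := by
  obtain ⟨hlo, hhi⟩ := lintegral_ofReal_exp_mem_Icc ν (h := fun y => -f (x, y))
    fun y => (abs_neg _).trans_le (hC (x, y))
  rw [negLogMarginal, abs_neg]
  exact abs_log_toReal_le hlo hhi

lemma ofReal_exp_neg_negLogMarginal (x : E) :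
    ENNReal.ofReal (Real.exp (-negLogMarginal ν f x)) =
      ∫⁻ y, ENNReal.ofReal (Real.exp (-f (x, y))) ∂ν := by
  obtain ⟨hlo, hhi⟩ := lintegral_ofReal_exp_mem_Icc ν (h := fun y => -f (x, y))
    fun y => (abs_neg _).trans_le (hC (x, y))
  have hJ : (∫⁻ y, ENNReal.ofReal (Real.exp (-f (x, y))) ∂ν) ≠ ⊤ :=
    ne_top_of_le_ne_top ENNReal.ofReal_ne_top hhi
  rw [negLogMarginal, neg_neg, Real.exp_log ((Real.exp_pos _).trans_le
    ((ENNReal.ofReal_le_iff_le_toReal hJ).mp hlo)), ENNReal.ofReal_toReal hJ]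

end Marginal

section

variable {E F : Type*} [AddGroup E] [AddGroup F]

noncomputable def infConv (W : E → EReal) (f : E → ℝ) (x : E) : EReal :=
  ⨅ y, (f y : EReal) + W (x - y)

lemma propertyTau_iff [MeasurableSpace E] (μ : Measure E) (W : E → EReal) :
    PropertyTau μ W ↔ ∀ f : E → ℝ, Measurable f → (∃ C : ℝ, ∀ x, |f x| ≤ C) →
      (∫⁻ x, EReal.exp (infConv W f x) ∂μ) * ∫⁻ x, ENNReal.ofReal (Real.exp (-f x)) ∂μ ≤ 1 := by
  rw [PropertyTau, expE_eq_exp]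
  rfl

lemma exp_infConv_add_le (W₁ : E → EReal) (W₂ : F → EReal) (f : E × F → ℝ) {x₁ y₁ : E}
    (hW₁ : W₁ (x₁ - y₁) ≠ ⊤) (x₂ : F) :
    EReal.exp (infConv (fun p => W₁ p.1 + W₂ p.2) f (x₁, x₂)) ≤
      EReal.exp (W₁ (x₁ - y₁)) * EReal.exp (infConv W₂ (fun y₂ => f (y₁, y₂)) x₂) := by
  rw [infConv, EReal.exp_iInf, infConv, EReal.exp_iInf,
    ENNReal.mul_iInf fun h => absurd (EReal.exp_eq_top_iff.mp h) hW₁]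
  refine le_iInf fun y₂ => (iInf_le _ (y₁, y₂)).trans_eq ?_
  rw [← EReal.exp_add, add_left_comm]
  rfl

lemma lintegral_exp_infConv_add_le [MeasurableSpace F] (W₁ : E → EReal) (W₂ : F → EReal)
    (ν : Measure F) (f : E × F → ℝ) (g : E → ℝ)
    (hg : ∀ y₁, ∫⁻ x₂, EReal.exp (infConv W₂ (fun y₂ => f (y₁, y₂)) x₂) ∂ν ≤
      ENNReal.ofReal (Real.exp (g y₁))) (x₁ : E) :
    ∫⁻ x₂, EReal.exp (infConv (fun p => W₁ p.1 + W₂ p.2) f (x₁, x₂)) ∂ν ≤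
      EReal.exp (infConv W₁ g x₁) := by
  rw [infConv, EReal.exp_iInf]
  refine le_iInf fun y₁ => ?_
  by_cases hW₁ : W₁ (x₁ - y₁) = ⊤
  · simp [hW₁]
  calc ∫⁻ x₂, EReal.exp (infConv (fun p => W₁ p.1 + W₂ p.2) f (x₁, x₂)) ∂ν
      ≤ ∫⁻ x₂, EReal.exp (W₁ (x₁ - y₁)) *
          EReal.exp (infConv W₂ (fun y₂ => f (y₁, y₂)) x₂) ∂ν :=
        lintegral_mono (exp_infConv_add_le W₁ W₂ f hW₁)
    _ = EReal.exp (W₁ (x₁ - y₁)) *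
          ∫⁻ x₂, EReal.exp (infConv W₂ (fun y₂ => f (y₁, y₂)) x₂) ∂ν :=
        lintegral_const_mul' _ _ (EReal.exp_eq_top_iff.not.mpr hW₁)
    _ ≤ EReal.exp (W₁ (x₁ - y₁)) * ENNReal.ofReal (Real.exp (g y₁)) := by gcongr; exact hg y₁
    _ = EReal.exp (g y₁ + W₁ (x₁ - y₁)) := by rw [EReal.exp_add, EReal.exp_coe, mul_comm]

theorem PropertyTau.prod [MeasurableSpace E] [MeasurableSpace F] {μ : Measure E}
    {ν : Measure F} [IsProbabilityMeasure ν] {W₁ : E → EReal} {W₂ : F → EReal}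
    (h₁ : PropertyTau μ W₁) (h₂ : PropertyTau ν W₂) :
    PropertyTau (μ.prod ν) (fun p => W₁ p.1 + W₂ p.2) := by
  rw [propertyTau_iff] at h₁ h₂ ⊢
  rintro f hf ⟨C, hC⟩
  set g := negLogMarginal ν f
  have hg_exp_neg := ofReal_exp_neg_negLogMarginal (ν := ν) hC
  have hτ₂ : ∀ y₁, ∫⁻ x₂, EReal.exp (infConv W₂ (fun y₂ => f (y₁, y₂)) x₂) ∂ν ≤
      ENNReal.ofReal (Real.exp (g y₁)) := fun y₁ =>
    ENNReal.le_ofReal_exp_of_mul_le_one <| (hg_exp_neg y₁).symm ▸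
      h₂ _ (hf.comp measurable_prodMk_left) ⟨C, fun y₂ => hC (y₁, y₂)⟩
  calc (∫⁻ x, EReal.exp (infConv (fun p => W₁ p.1 + W₂ p.2) f x) ∂μ.prod ν) *
        ∫⁻ x, ENNReal.ofReal (Real.exp (-f x)) ∂μ.prod ν
      ≤ (∫⁻ x₁, EReal.exp (infConv W₁ g x₁) ∂μ) *
          ∫⁻ x₁, ENNReal.ofReal (Real.exp (-g x₁)) ∂μ := by
        gcongr ?_ * ?_
        · exact (lintegral_prod_le _).trans
            (lintegral_mono (lintegral_exp_infConv_add_le W₁ W₂ ν f g hτ₂))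
        · rw [lintegral_prod _ (by fun_prop)]
          exact (lintegral_congr hg_exp_neg).ge
    _ ≤ 1 := h₁ g (measurable_negLogMarginal hf) ⟨C, abs_negLogMarginal_le (ν := ν) hC⟩

end

theorem stmt_5_general (n₁ n₂ : ℕ)
    (μ₁ : Measure (Fin n₁ → ℝ))
    (μ₂ : Measure (Fin n₂ → ℝ)) [IsProbabilityMeasure μ₂]
    (W₁ : (Fin n₁ → ℝ) → EReal)
    (W₂ : (Fin n₂ → ℝ) → EReal)
    (h₁ : PropertyTau μ₁ W₁) (h₂ : PropertyTau μ₂ W₂) :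
    PropertyTau (μ₁.prod μ₂) (fun p => W₁ p.1 + W₂ p.2) :=
  h₁.prod h₂

/-- If `(μ₁, W₁)` and `(μ₂, W₂)` satisfy property `(τ)`, then so does the product pair
`(μ₁ ⊗ μ₂, W)` with `W(x₁, x₂) = W₁(x₁) + W₂(x₂)`. -/
theorem stmt_5 (n₁ n₂ : ℕ)
    (μ₁ : Measure (Fin n₁ → ℝ)) [IsProbabilityMeasure μ₁]
    (μ₂ : Measure (Fin n₂ → ℝ)) [IsProbabilityMeasure μ₂]
    (W₁ : (Fin n₁ → ℝ) → EReal) (hW₁ : ∀ x, 0 ≤ W₁ x)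
    (W₂ : (Fin n₂ → ℝ) → EReal) (hW₂ : ∀ x, 0 ≤ W₂ x)
    (h₁ : PropertyTau μ₁ W₁) (h₂ : PropertyTau μ₂ W₂) :
    PropertyTau (μ₁.prod μ₂) (fun p => W₁ p.1 + W₂ p.2) :=
  stmt_5_general n₁ n₂ μ₁ μ₂ W₁ W₂ h₁ h₂
end

section
/- If a pair (μ, W) satisfies property (τ), then for every Borel set A ⊆ ℝⁿ and every t > 0, μ(A + B_W(t)) ≥ e^t μ(A) / ((e^t - 1)μ(A) + 1), where B_W(t) = {x : W(x) ≤ t}. -/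
open MeasureTheory
open scoped ENNReal Pointwise

/-!
Test property `(τ)` on `f = t · 1_{Aᶜ}`. Since `W ≥ 0`, the infimal convolution `W □ f` is
nonnegative, and it is at least `t` off `A + B_W(t)`: a point `x` with `W □ f (x) < t` has some
`y ∈ A` with `W (x - y) < t`. Hence `∫ e^{W □ f} ≥ 1 + (e^t - 1)(1 - μ(A + B_W(t)))`, while
`∫ e^{-f} = μ(A) + e^{-t}(1 - μ(A))`; property `(τ)` bounds the product of the two by `1`, and
solving for `μ(A + B_W(t))` gives the claim.
-/

open Set

lemma ofReal_exp_le_expE {r : ℝ} {z : EReal} (h : (r : EReal) ≤ z) :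
    ENNReal.ofReal (Real.exp r) ≤ expE z := by
  have hz : z ≠ ⊥ := ne_bot_of_le_ne_bot (EReal.coe_ne_bot r) h
  rcases eq_or_ne z ⊤ with rfl | hz'
  · simp [expE]
  · rw [expE, if_neg hz, if_neg hz']
    gcongr
    rwa [← EReal.coe_le_coe_iff, EReal.coe_toReal hz' hz]

lemma lintegral_exp_neg_indicator_compl {E : Type*} [MeasurableSpace E] {μ : Measure E}
    [IsProbabilityMeasure μ] {A : Set E} (hA : MeasurableSet A) (t : ℝ) :
    ∫⁻ x, ENNReal.ofReal (Real.exp (-Aᶜ.indicator (fun _ ↦ t) x)) ∂μ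
      = μ A + ENNReal.ofReal (Real.exp (-t)) * (1 - μ A) := by
  have hsplit : ∀ x, ENNReal.ofReal (Real.exp (-Aᶜ.indicator (fun _ ↦ t) x))
      = A.indicator 1 x + Aᶜ.indicator (fun _ ↦ ENNReal.ofReal (Real.exp (-t))) x := by
    intro x
    by_cases hx : x ∈ A <;> simp [hx]
  rw [lintegral_congr hsplit, lintegral_add_left (measurable_one.indicator hA),
    lintegral_indicator_one hA, lintegral_indicator_const hA.compl, prob_compl_eq_one_sub hA]

section InfConvolution

variable {E : Type*} [AddCommGroup E] {W : E → EReal} {A : Set E} {t : ℝ}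

lemma nonneg_iInf_indicator_compl_add (hW : ∀ x, 0 ≤ W x) (ht : 0 ≤ t) (x : E) :
    (0 : EReal) ≤ ⨅ y, ((Aᶜ.indicator (fun _ ↦ t) y : ℝ) : EReal) + W (x - y) :=
  le_iInf fun y ↦ add_nonneg (EReal.coe_nonneg.2 (indicator_nonneg (fun _ _ ↦ ht) y)) (hW _)

lemma le_iInf_indicator_compl_add_of_notMem (hW : ∀ x, 0 ≤ W x) {x : E}
    (hx : x ∉ A + {z | W z ≤ (t : EReal)}) :
    (t : EReal) ≤ ⨅ y, ((Aᶜ.indicator (fun _ ↦ t) y : ℝ) : EReal) + W (x - y) := by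
  refine le_iInf fun y ↦ ?_
  by_cases hy : y ∈ A
  · rw [indicator_of_notMem (notMem_compl_iff.2 hy), EReal.coe_zero, zero_add]
    by_contra! hlt
    exact hx ⟨y, hy, x - y, hlt.le, add_sub_cancel y x⟩
  · rw [indicator_of_mem (mem_compl hy)]
    exact le_add_of_nonneg_right (hW _)

/-- With `f = t · 1_{Aᶜ}`, the integrand `e^{W □ f}` is at least `1` everywhere and at least `e^t`
outside the measurable hull of `A + B_W(t)`. -/
lemma one_add_mul_le_lintegral_expE_iInf [MeasurableSpace E] {μ : Measure E}
    [IsProbabilityMeasure μ] (hW : ∀ x, 0 ≤ W x) (ht : 0 ≤ t) :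
    1 + ENNReal.ofReal (Real.exp t - 1) * (1 - μ (A + {z | W z ≤ (t : EReal)}))
      ≤ ∫⁻ x, expE (⨅ y, ((Aᶜ.indicator (fun _ ↦ t) y : ℝ) : EReal) + W (x - y)) ∂μ := by
  set S := toMeasurable μ (A + {z | W z ≤ (t : EReal)})
  have hS : MeasurableSet S := measurableSet_toMeasurable _ _
  have hbound : ∀ x, Sᶜ.indicator (fun _ ↦ ENNReal.ofReal (Real.exp t - 1)) x + 1
      ≤ expE (⨅ y, ((Aᶜ.indicator (fun _ ↦ t) y : ℝ) : EReal) + W (x - y)) := by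
    intro x
    by_cases hx : x ∈ S
    · rw [indicator_of_notMem (notMem_compl_iff.2 hx), zero_add]
      simpa using ofReal_exp_le_expE (r := 0)
        (by exact_mod_cast nonneg_iInf_indicator_compl_add hW ht x)
    · rw [indicator_of_mem (mem_compl hx), ← ENNReal.ofReal_one,
        ← ENNReal.ofReal_add (by linarith [Real.add_one_le_exp t]) zero_le_one, sub_add_cancel]
      exact ofReal_exp_le_expE
        (le_iInf_indicator_compl_add_of_notMem hW fun h ↦ hx (subset_toMeasurable _ _ h))
  calc 1 + ENNReal.ofReal (Real.exp t - 1) * (1 - μ (A + {z | W z ≤ (t : EReal)}))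
      = ∫⁻ x, Sᶜ.indicator (fun _ ↦ ENNReal.ofReal (Real.exp t - 1)) x + 1 ∂μ := by
        rw [lintegral_add_right _ measurable_const, lintegral_one, measure_univ,
          lintegral_indicator_const hS.compl, prob_compl_eq_one_sub hS, measure_toMeasurable,
          add_comm]
    _ ≤ _ := lintegral_mono hbound

end InfConvolution

lemma div_le_of_one_add_mul_mul_le {a b t : ℝ} (ha : 0 ≤ a) (ht : 0 < t)
    (h : (1 + (Real.exp t - 1) * (1 - b)) * (a + Real.exp (-t) * (1 - a)) ≤ 1) :
    Real.exp t * a / ((Real.exp t - 1) * a + 1) ≤ b := by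
  have he : 0 < Real.exp t - 1 := by linarith [Real.add_one_lt_exp ht.ne']
  have hD : 0 < (Real.exp t - 1) * a + 1 := by positivity
  have hinv : Real.exp t * Real.exp (-t) = 1 := by
    rw [← Real.exp_add, add_neg_cancel, Real.exp_zero]
  have h' : (1 + (Real.exp t - 1) * (1 - b)) * ((Real.exp t - 1) * a + 1) ≤ Real.exp t := by
    have := mul_le_mul_of_nonneg_left h (Real.exp_pos t).le
    linear_combination this - (1 + (Real.exp t - 1) * (1 - b)) * (1 - a) * hinv
  rw [div_le_iff₀ hD]
  refine le_of_mul_le_mul_left ?_ he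
  linear_combination h'

namespace PropertyTau

variable {E : Type*} [MeasurableSpace E] [AddCommGroup E] {μ : Measure E}
  [IsProbabilityMeasure μ] {W : E → EReal} {A : Set E} {t : ℝ}

/-- Property `(τ)` tested on `f = t · 1_{Aᶜ}`. -/
lemma one_add_mul_mul_le (hτ : PropertyTau μ W) (hW : ∀ x, 0 ≤ W x) (hA : MeasurableSet A)
    (ht : 0 ≤ t) :
    (1 + ENNReal.ofReal (Real.exp t - 1) * (1 - μ (A + {z | W z ≤ (t : EReal)})))
      * (μ A + ENNReal.ofReal (Real.exp (-t)) * (1 - μ A)) ≤ 1 := by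
  have hbdd : ∃ C : ℝ, ∀ x, |Aᶜ.indicator (fun _ ↦ t) x| ≤ C :=
    ⟨t, fun x ↦ by by_cases hx : x ∈ A <;> simp [hx, abs_of_nonneg ht, ht]⟩
  calc _ ≤ (∫⁻ x, expE (⨅ y, ((Aᶜ.indicator (fun _ ↦ t) y : ℝ) : EReal) + W (x - y)) ∂μ)
        * ∫⁻ x, ENNReal.ofReal (Real.exp (-Aᶜ.indicator (fun _ ↦ t) x)) ∂μ := by
        rw [lintegral_exp_neg_indicator_compl hA t]
        exact mul_le_mul_left (one_add_mul_le_lintegral_expE_iInf hW ht) _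
    _ ≤ 1 := hτ _ (measurable_const.indicator hA.compl) hbdd

theorem div_le_measureReal_add (hτ : PropertyTau μ W) (hW : ∀ x, 0 ≤ W x)
    (hA : MeasurableSet A) (ht : 0 < t) :
    Real.exp t * μ.real A / ((Real.exp t - 1) * μ.real A + 1)
      ≤ μ.real (A + {z | W z ≤ (t : EReal)}) := by
  refine div_le_of_one_add_mul_mul_le measureReal_nonneg ht ?_
  have := ENNReal.toReal_mono ENNReal.one_ne_top (hτ.one_add_mul_mul_le hW hA ht.le)
  rwa [ENNReal.toReal_mul, ENNReal.toReal_add (by finiteness) (by finiteness),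
    ENNReal.toReal_add (by finiteness) (by finiteness), ENNReal.toReal_mul, ENNReal.toReal_mul,
    ENNReal.toReal_sub_of_le prob_le_one ENNReal.one_ne_top,
    ENNReal.toReal_sub_of_le prob_le_one ENNReal.one_ne_top,
    ENNReal.toReal_ofReal (by linarith [Real.add_one_le_exp t]),
    ENNReal.toReal_ofReal (Real.exp_pos _).le, ENNReal.toReal_one] at this

end PropertyTau

/-- If `(μ, W)` satisfies property `(τ)`, then for every Borel set `A` and `t > 0`,
`μ(A + B_W(t)) ≥ e^t μ(A) / ((e^t - 1) μ(A) + 1)`, where `B_W(t) = {x : W x ≤ t}`. -/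
theorem stmt_6 (n : ℕ) (μ : Measure (Fin n → ℝ)) [IsProbabilityMeasure μ]
    (W : (Fin n → ℝ) → EReal) (hW : ∀ x, 0 ≤ W x)
    (hτ : PropertyTau μ W) :
    ∀ A : Set (Fin n → ℝ), MeasurableSet A → ∀ t : ℝ, 0 < t →
      Real.exp t * (μ A).toReal / ((Real.exp t - 1) * (μ A).toReal + 1)
        ≤ (μ (A + {x | W x ≤ (t : EReal)})).toReal :=
  fun _ hA _ ht ↦ hτ.div_le_measureReal_add hW hA ht
end

section
/- The function φ(x) = √(x² + 1) − 1 − ln((√(x² + 1) + 1)/2) satisfies |φ'(x)| = |x|/(√(x² + 1) + 1) ≤ 1 for all real x, and e^{φ(x)} (1 − φ'(x)²) ≥ 1 for all real x. -/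
/-! With `s = √(x² + 1)` one has `x² = (s - 1)(s + 1)`, so `1 - φ'(x)² = 2 / (s + 1)`, which is positive
and gives `|φ'(x)| ≤ 1`. Writing `y = (s - 1) / 2`, also `e^{φ(x)} = e^{2y} / (y + 1)`, hence
`e^{φ(x)} (1 - φ'(x)²) = (e^y / (y + 1))²`, and this is at least `1` because `y + 1 ≤ e^y`. -/

open Real

namespace SymmExpCramer

/-- The Cramér transform of the symmetric exponential distribution. -/
noncomputable def φ (x : ℝ) : ℝ := √(x ^ 2 + 1) - 1 - log ((√(x ^ 2 + 1) + 1) / 2)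

lemma one_le_sqrt_sq_add_one (x : ℝ) : 1 ≤ √(x ^ 2 + 1) :=
  one_le_sqrt.mpr (by nlinarith [sq_nonneg x])

lemma hasDerivAt_φ (x : ℝ) : HasDerivAt φ (x / (√(x ^ 2 + 1) + 1)) x := by
  have hsqrt : HasDerivAt (fun y : ℝ => √(y ^ 2 + 1)) (2 * x / (2 * √(x ^ 2 + 1))) x := by
    simpa using ((hasDerivAt_pow 2 x).add_const 1).sqrt (by positivity)
  have hlog := ((hsqrt.add_const 1).div_const 2).log (by positivity)
  refine ((hsqrt.sub_const 1).sub hlog).congr_deriv ?_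
  field_simp
  ring

lemma one_sub_deriv_φ_sq (x : ℝ) :
    1 - (x / (√(x ^ 2 + 1) + 1)) ^ 2 = 2 / (√(x ^ 2 + 1) + 1) := by
  have hs2 : √(x ^ 2 + 1) ^ 2 = x ^ 2 + 1 := sq_sqrt (by positivity)
  field_simp
  linear_combination hs2

lemma abs_deriv_φ_le_one (x : ℝ) : |x / (√(x ^ 2 + 1) + 1)| ≤ 1 := by
  have hpos : 0 < 1 - (x / (√(x ^ 2 + 1) + 1)) ^ 2 := by
    rw [one_sub_deriv_φ_sq]
    positivity
  exact (sq_lt_one_iff_abs_lt_one _).mp (by linarith) |>.le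

lemma exp_φ_mul_one_sub_deriv_sq (x : ℝ) :
    exp (φ x) * (1 - (x / (√(x ^ 2 + 1) + 1)) ^ 2) =
      (exp ((√(x ^ 2 + 1) - 1) / 2) / ((√(x ^ 2 + 1) - 1) / 2 + 1)) ^ 2 := by
  have hexp : exp (√(x ^ 2 + 1) - 1) = exp ((√(x ^ 2 + 1) - 1) / 2) ^ 2 := by
    rw [← exp_nat_mul]; ring_nf
  have hy : (√(x ^ 2 + 1) - 1) / 2 + 1 = (√(x ^ 2 + 1) + 1) / 2 := by ring
  rw [one_sub_deriv_φ_sq, φ, exp_sub, exp_log (by positivity), hexp, hy]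
  field_simp

lemma one_le_exp_div_add_one_sq {y : ℝ} (hy : -1 < y) : 1 ≤ (exp y / (y + 1)) ^ 2 :=
  one_le_pow₀ ((one_le_div (by linarith)).mpr (add_one_le_exp y))

end SymmExpCramer

/-- The function `φ(x) = √(x² + 1) − 1 − ln((√(x² + 1) + 1)/2)` has derivative
`φ'(x) = x/(√(x² + 1) + 1)`, which satisfies `|φ'(x)| ≤ 1`, and moreover
`e^{φ(x)} (1 − φ'(x)²) ≥ 1` for all real `x`. -/
theorem stmt_10
    (φ : ℝ → ℝ)
    (hφ : ∀ x : ℝ, φ x = Real.sqrt (x ^ 2 + 1) - 1 -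
      Real.log ((Real.sqrt (x ^ 2 + 1) + 1) / 2)) :
    ∀ x : ℝ,
      HasDerivAt φ (x / (Real.sqrt (x ^ 2 + 1) + 1)) x ∧
      |x / (Real.sqrt (x ^ 2 + 1) + 1)| ≤ 1 ∧
      1 ≤ Real.exp (φ x) * (1 - (x / (Real.sqrt (x ^ 2 + 1) + 1)) ^ 2) := by
  obtain rfl : φ = SymmExpCramer.φ := funext hφ
  intro x
  refine ⟨SymmExpCramer.hasDerivAt_φ x, SymmExpCramer.abs_deriv_φ_le_one x, ?_⟩
  rw [SymmExpCramer.exp_φ_mul_one_sub_deriv_sq]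
  exact SymmExpCramer.one_le_exp_div_add_one_sq
    (by linarith [SymmExpCramer.one_le_sqrt_sq_add_one x])
end

section
/- If μ is a symmetric probability measure on ℝ with ∫ x² dμ(x) = 1, then for all 0 ≤ x ≤ 1, the Cramer transform satisfies Λ*_μ(x) ≤ (1/2)[(1 + x)ln(1 + x) + (1 − x)ln(1 − x)]. -/
/-!
By symmetry the moment generating function of `μ` is `∫ cosh (y s) dμ(s)`. Expanding `cosh` in
its power series, each even moment satisfies `∫ s^(2k) dμ ≥ (∫ s² dμ)^k = 1` by Jensen, so the
moment generating function dominates `cosh y`, that of the Rademacher distribution. Hence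
`Λ*_μ(x) ≤ sup_y (x y - log cosh y)`, and Gibbs' inequality bounds `x y - log cosh y` by the
entropy expression on the right.
-/

open MeasureTheory Real
open scoped ENNReal Nat

lemma Real.mul_log_sub_mul_log_le_sub {p t : ℝ} (hp : 0 ≤ p) (ht : 0 < t) :
    p * log t - p * log p ≤ t - p := by
  rcases hp.eq_or_lt with rfl | hp
  · simpa using ht.le
  · calc p * log t - p * log p = p * log (t / p) := by rw [log_div ht.ne' hp.ne']; ring
      _ ≤ p * (t / p - 1) := by gcongr; exact log_le_sub_one_of_pos (div_pos ht hp)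
      _ = t - p := by field_simp

lemma Real.mul_sub_log_cosh_le {x : ℝ} (hx₀ : -1 ≤ x) (hx₁ : x ≤ 1) (y : ℝ) :
    x * y - log (cosh y) ≤ (1 / 2) * ((1 + x) * log (1 + x) + (1 - x) * log (1 - x)) := by
  -- Gibbs' inequality between the weights `1 ± x` and `exp (± y) / cosh y`, both summing to `2`.
  have hplus := mul_log_sub_mul_log_le_sub (p := 1 + x) (t := exp y / cosh y) (by linarith)
    (by positivity)
  have hminus := mul_log_sub_mul_log_le_sub (p := 1 - x) (t := exp (-y) / cosh y) (by linarith)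
    (by positivity)
  have hsum : exp y / cosh y + exp (-y) / cosh y = 2 := by
    rw [cosh_eq]; field_simp
  rw [log_div (exp_ne_zero _) (cosh_pos y).ne', log_exp] at hplus hminus
  linarith

lemma ENNReal.ofReal_cosh_eq_tsum (t : ℝ) :
    ENNReal.ofReal (cosh t) = ∑' k : ℕ, ENNReal.ofReal (t ^ 2) ^ k / (2 * k)! := by
  have hterm (k : ℕ) : 0 ≤ t ^ (2 * k) / (2 * k)! := by
    have := (even_two_mul k).pow_nonneg t; positivity
  rw [cosh_eq_tsum, ENNReal.ofReal_tsum_of_nonneg hterm t.hasSum_cosh.summable]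
  congr 1 with k
  rw [ENNReal.ofReal_div_of_pos (by positivity), pow_mul, ENNReal.ofReal_pow (sq_nonneg t),
    ENNReal.ofReal_natCast]

lemma pow_lintegral_le_lintegral_pow {α : Type*} [MeasurableSpace α] {μ : Measure α}
    [IsProbabilityMeasure μ] {f : α → ℝ≥0∞} (hf : AEMeasurable f μ) (k : ℕ) :
    (∫⁻ a, f a ∂μ) ^ k ≤ ∫⁻ a, f a ^ k ∂μ := by
  rcases k.eq_zero_or_pos with rfl | hk
  · simp
  have hk' : (0 : ℝ) < k := by exact_mod_cast hk
  have := eLpNorm'_le_eLpNorm'_of_exponent_le one_pos (by exact_mod_cast hk : (1 : ℝ) ≤ k) μ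
    hf.aestronglyMeasurable
  simp only [eLpNorm', enorm_eq_self, ENNReal.rpow_one, div_one, one_div,
    ENNReal.rpow_natCast] at this
  exact_mod_cast (ENNReal.le_rpow_inv_iff hk').1 this

lemma lintegral_ofReal_exp_mul_eq_cosh {μ : Measure ℝ} (hsymm : μ.map (fun s => -s) = μ)
    (y : ℝ) :
    ∫⁻ s, ENNReal.ofReal (exp (y * s)) ∂μ = ∫⁻ s, ENNReal.ofReal (cosh (y * s)) ∂μ := by
  have hneg : ∫⁻ s, ENNReal.ofReal (exp (-(y * s))) ∂μ =
      ∫⁻ s, ENNReal.ofReal (exp (y * s)) ∂μ := by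
    conv_rhs => rw [← hsymm]
    rw [lintegral_map (by fun_prop) measurable_neg]
    simp only [mul_neg]
  have hcosh (t : ℝ) :
      2 * ENNReal.ofReal (cosh t) = ENNReal.ofReal (exp t) + ENNReal.ofReal (exp (-t)) := by
    rw [← ENNReal.ofReal_ofNat 2, ← ENNReal.ofReal_mul zero_le_two, cosh_eq,
      mul_div_cancel₀ _ two_ne_zero, ENNReal.ofReal_add (exp_nonneg _) (exp_nonneg _)]
  have htwice : 2 * ∫⁻ s, ENNReal.ofReal (cosh (y * s)) ∂μ =
      2 * ∫⁻ s, ENNReal.ofReal (exp (y * s)) ∂μ := by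
    rw [← lintegral_const_mul _ (by fun_prop)]
    simp only [hcosh]
    rw [lintegral_add_left (by fun_prop), hneg, two_mul]
  exact ((ENNReal.mul_right_inj two_ne_zero ENNReal.ofNat_ne_top).1 htwice).symm

lemma ofReal_cosh_le_lintegral_cosh {μ : Measure ℝ} [IsProbabilityMeasure μ]
    (hmom : 1 ≤ ∫⁻ s, ENNReal.ofReal (s ^ 2) ∂μ) (y : ℝ) :
    ENNReal.ofReal (cosh y) ≤ ∫⁻ s, ENNReal.ofReal (cosh (y * s)) ∂μ := by
  have hterm (k : ℕ) (s : ℝ) : ENNReal.ofReal ((y * s) ^ 2) ^ k / (2 * k)! =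
      ENNReal.ofReal (y ^ 2) ^ k / (2 * k)! * ENNReal.ofReal (s ^ 2) ^ k := by
    rw [mul_pow, ENNReal.ofReal_mul (sq_nonneg y), mul_pow, div_eq_mul_inv, div_eq_mul_inv]
    ring
  simp only [ENNReal.ofReal_cosh_eq_tsum, hterm]
  rw [lintegral_tsum fun k => by fun_prop]
  refine ENNReal.tsum_le_tsum fun k => ?_
  rw [lintegral_const_mul _ (by fun_prop)]
  calc ENNReal.ofReal (y ^ 2) ^ k / (2 * k)!
      ≤ ENNReal.ofReal (y ^ 2) ^ k / (2 * k)! * (∫⁻ s, ENNReal.ofReal (s ^ 2) ∂μ) ^ k :=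
        le_mul_of_one_le_right' (one_le_pow₀ hmom)
    _ ≤ _ := by gcongr; exact pow_lintegral_le_lintegral_pow (by fun_prop) k

/-- If `μ` is a symmetric probability measure on `ℝ` with unit second moment, then for
`0 ≤ x ≤ 1` the Cramer transform satisfies
`Λ*_μ(x) ≤ (1/2)[(1+x)ln(1+x) + (1−x)ln(1−x)]`. -/
theorem stmt_14 (μ : Measure ℝ) [IsProbabilityMeasure μ]
    (hsymm : μ.map (fun s => -s) = μ)
    (hmom : ∫ s, s ^ 2 ∂μ = 1) :
    ∀ x : ℝ, 0 ≤ x → x ≤ 1 →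
      (⨆ y : ℝ, ((x * y : ℝ) : EReal) -
          ENNReal.log (∫⁻ s, ENNReal.ofReal (Real.exp (y * s)) ∂μ))
        ≤ (((1 / 2) * ((1 + x) * Real.log (1 + x) + (1 - x) * Real.log (1 - x)) : ℝ) : EReal) := by
  intro x hx₀ hx₁
  have hsq : 1 ≤ ∫⁻ s, ENNReal.ofReal (s ^ 2) ∂μ := by
    rw [← ofReal_integral_eq_lintegral_ofReal (.of_integral_ne_zero (by simp [hmom]))
      (ae_of_all _ fun s => sq_nonneg s), hmom, ENNReal.ofReal_one]
  refine iSup_le fun y => ?_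
  have hlog : (log (cosh y) : EReal) ≤ ENNReal.log (∫⁻ s, ENNReal.ofReal (exp (y * s)) ∂μ) := by
    rw [← ENNReal.log_ofReal_of_pos (cosh_pos y), lintegral_ofReal_exp_mul_eq_cosh hsymm]
    exact ENNReal.log_monotone (ofReal_cosh_le_lintegral_cosh hsq y)
  calc _ ≤ ((x * y : ℝ) : EReal) - (log (cosh y) : EReal) := EReal.sub_le_sub le_rfl hlog
    _ ≤ _ := by exact_mod_cast mul_sub_log_cosh_le (by linarith) hx₁ y
end

section
/- Let θ > 0 satisfy Λ*_ν(θ) = ln 2, where Λ*_ν(x) = √(x² + 1) − 1 − ln((√(x² + 1) + 1)/2) is the Cramer transform of the symmetric exponential distribution. Then for all 0 ≤ x ≤ 1, Λ*_ν(θx) ≥ (1/2)[(1 + x)ln(1 + x) + (1 − x)ln(1 − x)]. -/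
/-!
Both sides are compared with `x² ln 2`. If `f 0 = 0`, the map `t ↦ xⁿ f t - f (t x)` has
derivative `x (xⁿ⁻¹ f' t - f' (t x))`, so a pointwise comparison of `f' (t x)` with `xⁿ⁻¹ f' t`
integrates to one of `f (b x)` with `xⁿ f b`. Since `Λ*_ν'(y) / y = 1 / (√(y² + 1) + 1)` decreases,
`Λ*_ν(θ x) ≥ x² Λ*_ν(θ) = x² ln 2`. The derivative of `(ln cosh)*` is `artanh`, whose derivative
`1 / (1 - u²)` increases, so the case `n = 1` gives `artanh (t x) ≤ x artanh t`, and then the case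
`n = 2` gives `(ln cosh)*(x) ≤ x² (ln cosh)*(1) = x² ln 2`.
-/

open Real Set

theorem comp_mul_le_pow_mul_of_hasDerivAt {f f' : ℝ → ℝ} {b x : ℝ} (n : ℕ)
    (hb : 0 ≤ b) (hx₀ : 0 ≤ x) (hx₁ : x ≤ 1) (hf₀ : f 0 = 0)
    (hf : ContinuousOn f (Icc 0 b)) (hf' : ∀ t ∈ Ico 0 b, HasDerivAt f (f' t) t)
    (hle : ∀ t ∈ Ioo 0 b, x * f' (t * x) ≤ x ^ n * f' t) :
    f (b * x) ≤ x ^ n * f b := by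
  have hmaps : MapsTo (· * x) (Icc 0 b) (Icc 0 b) := fun t ht =>
    ⟨mul_nonneg ht.1 hx₀, (mul_le_of_le_one_right ht.1 hx₁).trans ht.2⟩
  have hmono : MonotoneOn (fun t => x ^ n * f t - f (t * x)) (Icc 0 b) := by
    refine monotoneOn_of_hasDerivWithinAt_nonneg
      (f' := fun t => x ^ n * f' t - f' (t * x) * x) (convex_Icc 0 b)
      ((continuousOn_const.mul hf).sub (hf.comp (continuous_mul_const x).continuousOn hmaps))
      (fun t ht => ?_) (fun t ht => ?_)
    · rw [interior_Icc] at ht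
      have htx : t * x ∈ Ico 0 b :=
        ⟨mul_nonneg ht.1.le hx₀, (mul_le_of_le_one_right ht.1.le hx₁).trans_lt ht.2⟩
      exact (((hf' t (Ioo_subset_Ico_self ht)).const_mul _).sub
        ((hf' _ htx).comp t (hasDerivAt_mul_const x))).hasDerivWithinAt
    · rw [interior_Icc] at ht
      exact sub_nonneg.2 (by simpa [mul_comm] using hle t ht)
  simpa [hf₀] using hmono ⟨le_rfl, hb⟩ ⟨hb, le_rfl⟩ hb

noncomputable def expCramer (y : ℝ) : ℝ :=
  √(y ^ 2 + 1) - 1 - log ((√(y ^ 2 + 1) + 1) / 2)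

theorem hasDerivAt_expCramer (y : ℝ) :
    HasDerivAt expCramer (y / (√(y ^ 2 + 1) + 1)) y := by
  have hs : 0 < √(y ^ 2 + 1) := sqrt_pos.2 (by positivity)
  have hsqrt : HasDerivAt (fun y : ℝ => √(y ^ 2 + 1)) (2 * y / (2 * √(y ^ 2 + 1))) y := by
    simpa using ((hasDerivAt_pow 2 y).add_const 1).sqrt (by positivity)
  refine (((hsqrt.sub_const 1).sub
    (((hsqrt.add_const 1).div_const 2).log (by positivity)))).congr_deriv ?_
  field_simp
  ring

theorem sq_mul_expCramer_le {b x : ℝ} (hb : 0 ≤ b) (hx₀ : 0 ≤ x) (hx₁ : x ≤ 1) :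
    x ^ 2 * expCramer b ≤ expCramer (b * x) := by
  have hneg := comp_mul_le_pow_mul_of_hasDerivAt (f := fun y => -expCramer y) 2 hb hx₀ hx₁
    (by simp [expCramer]) (fun y _ => (hasDerivAt_expCramer y).neg.continuousAt.continuousWithinAt)
    (fun y _ => (hasDerivAt_expCramer y).neg) fun t ht => ?_
  · linarith
  · have ht₀ : 0 ≤ t := ht.1.le
    have hx2 : x ^ 2 ≤ 1 := pow_le_one₀ hx₀ hx₁
    have hsq : √((t * x) ^ 2 + 1) ≤ √(t ^ 2 + 1) :=
      sqrt_le_sqrt (by nlinarith [mul_nonneg (sq_nonneg t) (sub_nonneg.2 hx2)])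
    have : x ^ 2 * t / (√(t ^ 2 + 1) + 1) ≤ x ^ 2 * t / (√((t * x) ^ 2 + 1) + 1) := by
      gcongr
    calc x * -((t * x) / (√((t * x) ^ 2 + 1) + 1))
        = -(x ^ 2 * t / (√((t * x) ^ 2 + 1) + 1)) := by ring
      _ ≤ -(x ^ 2 * t / (√(t ^ 2 + 1) + 1)) := neg_le_neg this
      _ = x ^ 2 * -(t / (√(t ^ 2 + 1) + 1)) := by ring

theorem hasDerivAt_log_one_add_sub_log_one_sub {t : ℝ} (ht : t ∈ Ioo (-1) 1) :
    HasDerivAt (fun u => log (1 + u) - log (1 - u)) (2 / (1 - t ^ 2)) t := by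
  have h₁ : 1 + t ≠ 0 := by linarith [ht.1]
  have h₂ : 1 - t ≠ 0 := by linarith [ht.2]
  have h₃ : 1 - t ^ 2 ≠ 0 := by nlinarith [ht.1, ht.2]
  refine ((((hasDerivAt_id' t).const_add 1).log h₁).sub
    (((hasDerivAt_id' t).const_sub 1).log h₂)).congr_deriv ?_
  field_simp
  ring

theorem log_one_add_sub_log_one_sub_mul_le {t x : ℝ} (ht₀ : 0 ≤ t) (ht₁ : t < 1)
    (hx₀ : 0 ≤ x) (hx₁ : x ≤ 1) :
    log (1 + t * x) - log (1 - t * x) ≤ x * (log (1 + t) - log (1 - t)) := by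
  have hderiv : ∀ u ∈ Icc 0 t, HasDerivAt (fun u => log (1 + u) - log (1 - u))
      (2 / (1 - u ^ 2)) u := fun u hu =>
    hasDerivAt_log_one_add_sub_log_one_sub ⟨by linarith [hu.1], hu.2.trans_lt ht₁⟩
  simpa using comp_mul_le_pow_mul_of_hasDerivAt 1 ht₀ hx₀ hx₁ (by simp)
    (fun u hu => (hderiv u hu).continuousAt.continuousWithinAt)
    (fun u hu => hderiv u (Ico_subset_Icc_self hu)) fun u hu => by
      have hux : u * x ≤ u := mul_le_of_le_one_right hu.1.le hx₁
      have : 0 < 1 - u ^ 2 := by nlinarith [hu.1, hu.2]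
      have : 1 - u ^ 2 ≤ 1 - (u * x) ^ 2 := by nlinarith [mul_nonneg hu.1.le hx₀]
      rw [pow_one]
      gcongr

/-- `(ln cosh)*`, the Cramér transform of the Rademacher distribution. -/
noncomputable def rademacherCramer (x : ℝ) : ℝ :=
  (1 / 2) * ((1 + x) * log (1 + x) + (1 - x) * log (1 - x))

theorem hasDerivAt_rademacherCramer {t : ℝ} (ht : t ∈ Ioo (-1) 1) :
    HasDerivAt rademacherCramer ((1 / 2) * (log (1 + t) - log (1 - t))) t := by
  have h₁ : 1 + t ≠ 0 := by linarith [ht.1]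
  have h₂ : 1 - t ≠ 0 := by linarith [ht.2]
  have hadd := (hasDerivAt_id' t).const_add 1
  have hsub := (hasDerivAt_id' t).const_sub 1
  refine (((hadd.mul (hadd.log h₁)).add (hsub.mul (hsub.log h₂))).const_mul (1 / 2)).congr_deriv
    ?_
  field_simp
  ring

theorem continuous_rademacherCramer : Continuous rademacherCramer :=
  continuous_const.mul ((continuous_mul_log.comp (continuous_const_add 1)).add
    (continuous_mul_log.comp (continuous_sub_left 1)))

theorem rademacherCramer_one : rademacherCramer 1 = log 2 := by
  norm_num [rademacherCramer, ← mul_assoc]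

theorem rademacherCramer_le_sq_mul_log_two {x : ℝ} (hx₀ : 0 ≤ x) (hx₁ : x ≤ 1) :
    rademacherCramer x ≤ x ^ 2 * log 2 := by
  rw [← rademacherCramer_one]
  simpa using comp_mul_le_pow_mul_of_hasDerivAt 2 zero_le_one hx₀ hx₁
    (by simp [rademacherCramer]) continuous_rademacherCramer.continuousOn
    (fun t ht => hasDerivAt_rademacherCramer ⟨by linarith [ht.1], ht.2⟩) fun t ht => by
      have := log_one_add_sub_log_one_sub_mul_le ht.1.le ht.2 hx₀ hx₁
      nlinarith

/-- If `θ > 0` satisfies `Λ*_ν(θ) = ln 2` for the Cramer transform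
`Λ*_ν(x) = √(x² + 1) − 1 − ln((√(x² + 1) + 1)/2)` of the symmetric exponential
distribution, then `Λ*_ν(θx) ≥ (1/2)[(1+x)ln(1+x) + (1−x)ln(1−x)]` for `0 ≤ x ≤ 1`. -/
theorem stmt_16
    (Λ : ℝ → ℝ)
    (hΛ : ∀ x : ℝ, Λ x = Real.sqrt (x ^ 2 + 1) - 1 -
      Real.log ((Real.sqrt (x ^ 2 + 1) + 1) / 2))
    (θ : ℝ) (hθ : 0 < θ) (hθ2 : Λ θ = Real.log 2) :
    ∀ x : ℝ, 0 ≤ x → x ≤ 1 →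
      (1 / 2) * ((1 + x) * Real.log (1 + x) + (1 - x) * Real.log (1 - x)) ≤ Λ (θ * x) := by
  obtain rfl : Λ = expCramer := funext hΛ
  intro x hx₀ hx₁
  calc rademacherCramer x ≤ x ^ 2 * log 2 := rademacherCramer_le_sq_mul_log_two hx₀ hx₁
    _ = x ^ 2 * expCramer θ := by rw [hθ2]
    _ ≤ expCramer (θ * x) := sq_mul_expCramer_le hθ.le hx₀ hx₁
end

section
/- If g : ℝ → [0, ∞) is even, nonincreasing on [0, ∞), integrable with ∫ g(x) dx = 1 and ∫ x² g(x) dx = 1, then g(0) ≥ 1/(2√3). -/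
/-!
If `0 ≤ f ≤ c` has mass `m`, the second moment of `f` is smallest for the uniform density
`u = c · 1_{[-a, a]}` with `a = m / (2c)`: pointwise `(x² - a²) (f x - u x) ≥ 0`, and integrating
gives `∫ x² f - ∫ x² u ≥ a² (∫ f - ∫ u) = 0`, so `∫ x² f ≥ ∫ x² u = m³ / (12 c²)`.
An even function that is nonincreasing on `[0, ∞)` is bounded by `c = g 0`, and with `m = 1` and
second moment `1` this reads `12 g(0)² ≥ 1`.
-/

open MeasureTheory Set

lemma integral_indicator_Icc_const {a : ℝ} (ha : 0 ≤ a) (c : ℝ) :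
    ∫ x, (Icc (-a) a).indicator (fun _ => c) x = 2 * a * c := by
  rw [integral_indicator_const _ measurableSet_Icc, measureReal_def, Real.volume_Icc,
    ENNReal.toReal_ofReal (by linarith), smul_eq_mul]
  ring

lemma sq_mul_indicator_Icc_const (a c : ℝ) :
    (fun x : ℝ => x ^ 2 * (Icc (-a) a).indicator (fun _ => c) x) =
      (Icc (-a) a).indicator (fun x => x ^ 2 * c) := by
  funext x
  by_cases hx : x ∈ Icc (-a) a <;> simp [hx]

lemma integral_sq_mul_indicator_Icc_const {a : ℝ} (ha : 0 ≤ a) (c : ℝ) :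
    ∫ x, x ^ 2 * (Icc (-a) a).indicator (fun _ => c) x = 2 * a ^ 3 * c / 3 := by
  rw [sq_mul_indicator_Icc_const, integral_indicator measurableSet_Icc,
    integral_Icc_eq_integral_Ioc, ← intervalIntegral.integral_of_le (by linarith),
    intervalIntegral.integral_mul_const, integral_pow]
  ring

lemma sq_sub_sq_mul_sub_indicator_nonneg {a c y : ℝ} (ha : 0 ≤ a) (hy0 : 0 ≤ y) (hyc : y ≤ c)
    (x : ℝ) :
    0 ≤ (x ^ 2 - a ^ 2) * (y - (Icc (-a) a).indicator (fun _ => c) x) := by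
  by_cases hx : x ∈ Icc (-a) a
  · rw [indicator_of_mem hx]
    have : x ^ 2 ≤ a ^ 2 := sq_le_sq' hx.1 hx.2
    exact mul_nonneg_of_nonpos_of_nonpos (by linarith) (by linarith)
  · rw [indicator_of_notMem hx, sub_zero]
    have : a ^ 2 ≤ x ^ 2 := by
      rw [mem_Icc, not_and_or, not_le, not_le] at hx
      rcases hx with h | h <;> nlinarith
    exact mul_nonneg (by linarith) hy0

theorem integral_pow_three_div_le_integral_sq_mul {f : ℝ → ℝ} {c : ℝ} (hc : 0 < c)
    (hf0 : ∀ x, 0 ≤ f x) (hfc : ∀ x, f x ≤ c) (hf : Integrable f)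
    (hf2 : Integrable fun x => x ^ 2 * f x) :
    (∫ x, f x) ^ 3 / (12 * c ^ 2) ≤ ∫ x, x ^ 2 * f x := by
  set m := ∫ x, f x
  set a := m / (2 * c) with ha_def
  have ha : 0 ≤ a := div_nonneg (integral_nonneg hf0) (by positivity)
  set u := (Icc (-a) a).indicator fun _ => c
  have hu : Integrable u :=
    (integrable_indicator_iff measurableSet_Icc).2 (integrableOn_const measure_Icc_lt_top.ne)
  have hu2 : Integrable fun x => x ^ 2 * u x := by
    rw [sq_mul_indicator_Icc_const, integrable_indicator_iff measurableSet_Icc]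
    exact (continuous_pow 2 |>.mul continuous_const).integrableOn_Icc
  have hmass_u : ∫ x, u x = m := by
    rw [integral_indicator_Icc_const ha, ha_def]
    field_simp
  have hmom_u : ∫ x, x ^ 2 * u x = m ^ 3 / (12 * c ^ 2) := by
    rw [integral_sq_mul_indicator_Icc_const ha, ha_def]
    field_simp
    ring
  have key : 0 ≤ ∫ x, (x ^ 2 - a ^ 2) * (f x - u x) :=
    integral_nonneg fun x => sq_sub_sq_mul_sub_indicator_nonneg ha (hf0 x) (hfc x) x
  have expand : ∫ x, (x ^ 2 - a ^ 2) * (f x - u x) =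
      (∫ x, x ^ 2 * f x) - (∫ x, x ^ 2 * u x) - a ^ 2 * (m - ∫ x, u x) := by
    have : (fun x => (x ^ 2 - a ^ 2) * (f x - u x)) =
        fun x => (x ^ 2 * f x - x ^ 2 * u x) - a ^ 2 * (f x - u x) := by
      funext x
      ring
    have hsub2 : Integrable fun x => x ^ 2 * f x - x ^ 2 * u x := hf2.sub hu2
    have hsub : Integrable fun x => a ^ 2 * (f x - u x) := (hf.sub hu).const_mul _
    rw [this, integral_sub hsub2 hsub, integral_sub hf2 hu2,
      integral_const_mul, integral_sub hf hu]
  rw [expand, hmass_u, hmom_u] at key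
  linarith

lemma le_apply_zero_of_even_of_antitoneOn {g : ℝ → ℝ} (heven : ∀ x, g (-x) = g x)
    (hanti : AntitoneOn g (Ici 0)) (x : ℝ) : g x ≤ g 0 := by
  rcases le_total 0 x with hx | hx
  · exact hanti self_mem_Ici hx hx
  · rw [← heven x]
    exact hanti self_mem_Ici (neg_nonneg.2 hx) (neg_nonneg.2 hx)

/-- Hensley-type bound: if `g : ℝ → [0, ∞)` is even, nonincreasing on `[0, ∞)`,
with `∫ g = 1` and `∫ x² g(x) dx = 1`, then `g(0) ≥ 1/(2√3)`. -/
theorem stmt_17 (g : ℝ → ℝ)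
    (hnonneg : ∀ x : ℝ, 0 ≤ g x)
    (heven : ∀ x : ℝ, g (-x) = g x)
    (hanti : AntitoneOn g (Set.Ici (0 : ℝ)))
    (hint : Integrable g)
    (hint2 : Integrable fun x : ℝ => x ^ 2 * g x)
    (hmass : ∫ x, g x = 1)
    (hmom : ∫ x, x ^ 2 * g x = 1) :
    1 / (2 * Real.sqrt 3) ≤ g 0 := by
  have hle := le_apply_zero_of_even_of_antitoneOn heven hanti
  have hpos : 0 < g 0 := by
    refine (hnonneg 0).lt_of_ne fun h => ?_
    have : g = 0 := funext fun x => le_antisymm ((hle x).trans h.ge) (hnonneg x)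
    simp [this] at hmass
  have h12 : 1 ≤ 12 * g 0 ^ 2 := by
    have := integral_pow_three_div_le_integral_sq_mul hpos hnonneg hle hint hint2
    rwa [hmass, hmom, one_pow, div_le_one (by positivity)] at this
  have hsqrt : Real.sqrt 3 ^ 2 = 3 := Real.sq_sqrt (by norm_num)
  rw [div_le_iff₀ (by positivity)]
  nlinarith [sq_nonneg (2 * Real.sqrt 3 * g 0 - 1), Real.sqrt_nonneg 3]
end

section
/- The Cramer transform of the symmetric exponential distribution satisfies Λ*_ν(x) ≥ (√(1 + |x|) − 1)² for all real x, where Λ*_ν(x) = √(x² + 1) − 1 − ln((√(x² + 1) + 1)/2). -/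
/-!
Put `t = √(x² + 1)` and `s = √((t + 1) / 2) ≥ 1`. Since `log s ≤ s - 1`, the logarithm
`log ((t + 1) / 2) = 2 log s` is at most `2 (s - 1)`, so the Cramer transform is at least
`t + 1 - 2 s = 2 s (s - 1)`. On the other hand `x² = t² - 1 = 4 s² (s² - 1)`, and for
`u = √(1 + |x|)` this relation `(u² - 1)² = 4 s² (s² - 1)` forces `(u - 1)² ≤ 2 s (s - 1)`.
-/

open Real

lemma log_le_two_mul_sqrt_sub_one {y : ℝ} (hy : 0 < y) : log y ≤ 2 * (√y - 1) :=
  calc log y = 2 * log √y := by rw [log_sqrt hy.le]; ring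
    _ ≤ 2 * (√y - 1) := by gcongr; exact log_le_sub_one_of_pos (sqrt_pos.2 hy)

/- `(u² - 1)²` is increasing in `u ≥ 1` and already reaches `4 s² (s² - 1)` at
`u = 1 + √(2 s (s - 1))`, because `√(2 s (s - 1)) ≥ s - 1`. -/
lemma sub_one_sq_le_of_sq_sub_one_sq_eq {s u : ℝ} (hs : 1 ≤ s) (hu : 1 ≤ u)
    (h : (u ^ 2 - 1) ^ 2 = 4 * s ^ 2 * (s ^ 2 - 1)) : (u - 1) ^ 2 ≤ 2 * s * (s - 1) := by
  nlinarith [sq_nonneg (s - u), sq_nonneg (2 * s - u - 1),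
    mul_nonneg (sub_nonneg.2 hs) (sub_nonneg.2 hu)]

/-- The Cramer transform of the symmetric exponential distribution satisfies
`Λ*_ν(x) = √(x² + 1) − 1 − ln((√(x² + 1) + 1)/2) ≥ (√(1 + |x|) − 1)²`. -/
theorem stmt_18 :
    ∀ x : ℝ,
      (Real.sqrt (1 + |x|) - 1) ^ 2
        ≤ Real.sqrt (x ^ 2 + 1) - 1 - Real.log ((Real.sqrt (x ^ 2 + 1) + 1) / 2) := by
  intro x
  set t := √(x ^ 2 + 1)
  have ht : t ^ 2 = x ^ 2 + 1 := sq_sqrt (by positivity)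
  have ht1 : 1 ≤ t := one_le_sqrt.2 (by nlinarith)
  set s := √((t + 1) / 2)
  have hs : s ^ 2 = (t + 1) / 2 := sq_sqrt (by positivity)
  have hs1 : 1 ≤ s := one_le_sqrt.2 (by linarith)
  set u := √(1 + |x|)
  have hu : u ^ 2 = 1 + |x| := sq_sqrt (by positivity)
  have hu1 : 1 ≤ u := one_le_sqrt.2 (by linarith [abs_nonneg x])
  have hus : (u ^ 2 - 1) ^ 2 = 4 * s ^ 2 * (s ^ 2 - 1) := by
    rw [hu, hs]; linear_combination sq_abs x - ht
  calc (u - 1) ^ 2 ≤ 2 * s * (s - 1) := sub_one_sq_le_of_sq_sub_one_sq_eq hs1 hu1 hus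
    _ = t - 1 - 2 * (s - 1) := by linear_combination 2 * hs
    _ ≤ t - 1 - log ((t + 1) / 2) := by
      linarith [log_le_two_mul_sqrt_sub_one (show 0 < (t + 1) / 2 by positivity)]
end

section
/- Let W : ℝ → [0, ∞] and constants a, C₁, C₂ > 0 satisfy: for every t > 0, {x ∈ ℝ : W(x) ≤ a t} ⊆ C₁ t B₁ + C₂ √t B₂, where B₁ = B₂ = [−1, 1]. Then for every n ≥ 1 and every t > 0, {x ∈ ℝⁿ : Σᵢ W(xᵢ) ≤ a t} ⊆ C₁ t B₁ⁿ + C₂ √t B₂ⁿ, where B₁ⁿ, B₂ⁿ are the unit balls of the ℓ¹ and ℓ² norms on ℝⁿ and + is Minkowski sum. -/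
open scoped ENNReal Pointwise BigOperators

/-!
Put `tᵢ = W(xᵢ)/a`, so that `Σ tᵢ ≤ t`. The one-dimensional inclusion at level `tᵢ` splits
`xᵢ = yᵢ + zᵢ` with `|yᵢ| ≤ C₁ tᵢ` and `zᵢ² ≤ C₂² tᵢ`; summing gives `Σ |yᵢ| ≤ C₁ t` and
`Σ zᵢ² ≤ C₂² t`. The level `tᵢ = 0` is not covered by the hypothesis, but there the
one-dimensional inclusion at every level `ε > 0` forces `xᵢ = 0`.
-/

lemma eq_zero_of_forall_pos_abs_le {C₁ C₂ x : ℝ}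
    (hx : ∀ ε : ℝ, 0 < ε → |x| ≤ C₁ * ε + C₂ * Real.sqrt ε) : x = 0 := by
  have hlim : Filter.Tendsto (fun ε : ℝ => C₁ * ε + C₂ * Real.sqrt ε)
      (nhdsWithin 0 (Set.Ioi 0)) (nhds 0) := by
    have hcont : Continuous (fun ε : ℝ => C₁ * ε + C₂ * Real.sqrt ε) := by fun_prop
    simpa using (hcont.tendsto 0).mono_left nhdsWithin_le_nhds
  have hle : |x| ≤ 0 :=
    ge_of_tendsto hlim (Filter.eventually_of_mem self_mem_nhdsWithin hx)
  exact abs_nonpos_iff.mp hle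

lemma sublevel_subset_add_of_nonneg {W : ℝ → ℝ≥0∞} {a C₁ C₂ : ℝ}
    (h1 : ∀ t : ℝ, 0 < t →
      {x : ℝ | W x ≤ ENNReal.ofReal (a * t)}
        ⊆ {y : ℝ | |y| ≤ C₁ * t} + {z : ℝ | |z| ≤ C₂ * Real.sqrt t})
    {t : ℝ} (ht : 0 ≤ t) :
    {x : ℝ | W x ≤ ENNReal.ofReal (a * t)}
      ⊆ {y : ℝ | |y| ≤ C₁ * t} + {z : ℝ | |z| ≤ C₂ * Real.sqrt t} := by
  rcases ht.lt_or_eq with ht | rfl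
  · exact h1 t ht
  intro x hx
  have hx0 : x = 0 := by
    refine eq_zero_of_forall_pos_abs_le (C₁ := C₁) (C₂ := C₂) fun ε hε => ?_
    have hxε : W x ≤ ENNReal.ofReal (a * ε) := hx.trans (by simp)
    obtain ⟨y, hy, z, hz, rfl⟩ := h1 ε hε hxε
    exact (abs_add_le y z).trans (add_le_add hy hz)
  exact ⟨0, by simp, 0, by simp, by simp [hx0]⟩

lemma exists_levels_of_sum_le_ofReal {ι : Type*} [Fintype ι] {f : ι → ℝ≥0∞} {a t : ℝ}
    (ha : 0 < a) (ht : 0 ≤ t) (hf : ∑ i, f i ≤ ENNReal.ofReal (a * t)) :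
    ∃ s : ι → ℝ, (∀ i, 0 ≤ s i) ∧ ∑ i, s i ≤ t ∧ ∀ i, f i ≤ ENNReal.ofReal (a * s i) := by
  have hfin : ∀ i ∈ Finset.univ, f i ≠ ⊤ :=
    ENNReal.sum_ne_top.mp (ne_top_of_le_ne_top ENNReal.ofReal_ne_top hf)
  have hsum : ∑ i, (f i).toReal ≤ a * t := by
    rw [← ENNReal.toReal_sum hfin]
    exact ENNReal.toReal_le_of_le_ofReal (by positivity) hf
  refine ⟨fun i => (f i).toReal / a, fun i => by positivity, ?_, fun i => ?_⟩
  · rw [← Finset.sum_div, div_le_iff₀ ha]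
    linarith
  · rw [mul_div_cancel₀ _ ha.ne', ENNReal.ofReal_toReal (hfin i (Finset.mem_univ i))]

lemma mem_l1Ball_add_l2Ball_of_forall_mem {ι : Type*} [Fintype ι] {C₁ C₂ t : ℝ}
    (hC₁ : 0 ≤ C₁) (hC₂ : 0 ≤ C₂) {s x : ι → ℝ} (hs : ∀ i, 0 ≤ s i) (hst : ∑ i, s i ≤ t)
    (hx : ∀ i, x i ∈ {y : ℝ | |y| ≤ C₁ * s i} + {z : ℝ | |z| ≤ C₂ * Real.sqrt (s i)}) :
    x ∈ {y : ι → ℝ | (∑ i, |y i|) ≤ C₁ * t}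
      + {z : ι → ℝ | Real.sqrt (∑ i, (z i) ^ 2) ≤ C₂ * Real.sqrt t} := by
  choose y hy z hz hyz using hx
  refine ⟨y, ?_, z, ?_, funext hyz⟩
  · calc ∑ i, |y i| ≤ ∑ i, C₁ * s i := Finset.sum_le_sum fun i _ => hy i
      _ = C₁ * ∑ i, s i := (Finset.mul_sum _ _ _).symm
      _ ≤ C₁ * t := mul_le_mul_of_nonneg_left hst hC₁
  · have hz2 : ∀ i, z i ^ 2 ≤ C₂ ^ 2 * s i := fun i => by
      rw [← sq_abs, ← Real.sq_sqrt (hs i), ← mul_pow]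
      exact pow_le_pow_left₀ (abs_nonneg _) (hz i) 2
    refine Real.sqrt_le_iff.mpr ⟨by positivity, ?_⟩
    calc ∑ i, z i ^ 2 ≤ ∑ i, C₂ ^ 2 * s i := Finset.sum_le_sum fun i _ => hz2 i
      _ = C₂ ^ 2 * ∑ i, s i := (Finset.mul_sum _ _ _).symm
      _ ≤ C₂ ^ 2 * t := mul_le_mul_of_nonneg_left hst (sq_nonneg C₂)
      _ = (C₂ * Real.sqrt t) ^ 2 := by
        rw [mul_pow, Real.sq_sqrt ((Finset.sum_nonneg fun i _ => hs i).trans hst)]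

/-- Tensorization of ball inclusions: if for every `t > 0`,
`{x : W x ≤ a t} ⊆ C₁ t B₁ + C₂ √t B₂` in `ℝ`, then for every `n ≥ 1` and `t > 0`,
`{x : Σᵢ W(xᵢ) ≤ a t} ⊆ C₁ t B₁ⁿ + C₂ √t B₂ⁿ` in `ℝⁿ`, where `B₁ⁿ, B₂ⁿ` are the
`ℓ¹` and `ℓ²` unit balls and `+` is Minkowski sum. -/
theorem stmt_19 (W : ℝ → ℝ≥0∞) (a C₁ C₂ : ℝ)
    (ha : 0 < a) (hC₁ : 0 < C₁) (hC₂ : 0 < C₂)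
    (h1 : ∀ t : ℝ, 0 < t →
      {x : ℝ | W x ≤ ENNReal.ofReal (a * t)}
        ⊆ {y : ℝ | |y| ≤ C₁ * t} + {z : ℝ | |z| ≤ C₂ * Real.sqrt t}) :
    ∀ n : ℕ, 1 ≤ n → ∀ t : ℝ, 0 < t →
      {x : Fin n → ℝ | (∑ i, W (x i)) ≤ ENNReal.ofReal (a * t)}
        ⊆ {y : Fin n → ℝ | (∑ i, |y i|) ≤ C₁ * t}
          + {z : Fin n → ℝ | Real.sqrt (∑ i, (z i) ^ 2) ≤ C₂ * Real.sqrt t} := by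
  intro n _ t ht x hx
  obtain ⟨s, hs, hst, hWs⟩ := exists_levels_of_sum_le_ofReal ha ht.le hx
  exact mem_l1Ball_add_l2Ball_of_forall_mem hC₁.le hC₂.le hs hst fun i =>
    sublevel_subset_add_of_nonneg h1 (hs i) (hWs i)
end
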